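/- For every finite forest F = (V, E) (a simple graph with no cycles) and all elements v, x, y of a commutative ring, the subgraph counting polynomial satisfies H(F, v, x, y) = Σ_{W ⊆ V} v^{|W|} · x^{k(F[W])} · (x + y)^{|W| − k(F[W])}, where F[W] is the subgraph induced by W and k(F[W]) is its number of connected components. -/

import Mathlib

open Finset

/-- The edge set of a simple graph on a finite vertex type, as a `Finset`. -/
noncomputable def edgeFinset' {α : Type*} [Fintype α] (G : SimpleGraph α) :
    Finset (Sym2 α) :=
  (Set.toFinite G.edgeSet).toFinset

/-- The number of connected components of a graph. -/
noncomputable def ncomp {α : Type*} (G : SimpleGraph α) : ℕ :=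
  Nat.card G.ConnectedComponent

/-- The Potts model `Z(G, x, y) = Σ_{A ⊆ E} x^{c(V,A)} y^{|A|}`, where `c(V,A)` is the
number of connected components of the spanning subgraph `(V, A)`. -/
noncomputable def potts {α : Type*} [Fintype α] {R : Type*} [CommRing R]
    (G : SimpleGraph α) (x y : R) : R :=
  ∑ A ∈ (edgeFinset' G).powerset,
    x ^ ncomp (SimpleGraph.fromEdgeSet (A : Set (Sym2 α))) * y ^ A.card

/-- The subgraph counting polynomial
`H(G, v, x, y) = Σ_{(W,F), W ⊆ V, F ⊆ E(G[W])} v^{|W|} x^{c(W,F)} y^{|F|}`,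
where `c(W,F)` is the number of connected components of the graph `(W, F)`. -/
noncomputable def scp {α : Type*} [Fintype α] {R : Type*} [CommRing R]
    (G : SimpleGraph α) (v x y : R) : R :=
  ∑ W : Finset α, ∑ F ∈ (edgeFinset' (G.induce (W : Set α))).powerset,
    v ^ W.card * x ^ ncomp (SimpleGraph.fromEdgeSet (F : Set (Sym2 (W : Set α)))) * y ^ F.card

/-- The subgraph component polynomial `Q(G, v, x) = Σ_{W ⊆ V} v^{|W|} x^{k(G[W])}`. -/
noncomputable def subgraphCompPoly {α : Type*} [Fintype α] {R : Type*} [CommRing R]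
    (G : SimpleGraph α) (v x : R) : R :=
  ∑ W : Finset α, v ^ W.card * x ^ ncomp (G.induce (W : Set α))

/-- The number of bad monochromatic edges of a coloring `φ : α → Fin x` (colors `1, …, x`
identified with `Fin x` via `c ↦ c + 1`): edges all of whose vertices get the same color
`c ≤ y`, i.e. `(c : ℕ) < y`. -/
noncomputable def badCount {α : Type*} {x : ℕ} (G : SimpleGraph α) (y : ℕ)
    (φ : α → Fin x) : ℕ :=
  {e ∈ G.edgeSet | ∃ c : Fin x, (c : ℕ) < y ∧ ∀ w ∈ e, φ w = c}.ncard

/-- The number of monochromatic edges of a coloring `φ : α → Fin x`. -/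
noncomputable def monoCount {α : Type*} {x : ℕ} (G : SimpleGraph α)
    (φ : α → Fin x) : ℕ :=
  {e ∈ G.edgeSet | ∃ c : Fin x, ∀ w ∈ e, φ w = c}.ncard

/-- The bad coloring polynomial `χ̃(G, x, z) = Σ_{φ : V → {1,…,x}} z^{m(φ)}`, where `m(φ)`
is the number of monochromatic edges of `φ`. -/
noncomputable def badChrom {α : Type*} [Fintype α] [DecidableEq α] {R : Type*} [CommRing R]
    (G : SimpleGraph α) (x : ℕ) (z : R) : R :=
  ∑ φ : α → Fin x, z ^ monoCount G φ

/-- The trivariate chromatic polynomial `P̃(G, x, y, z) = Σ_{φ : V → {1,…,x}} z^{b(φ)}`,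
where `b(φ)` is the number of bad monochromatic edges of `φ` (monochromatic in a color
`c ≤ y`). -/
noncomputable def triChrom {α : Type*} [Fintype α] [DecidableEq α] {R : Type*} [CommRing R]
    (G : SimpleGraph α) (x y : ℕ) (z : R) : R :=
  ∑ φ : α → Fin x, z ^ badCount G y φ

/-- The subgraph counting polynomial as a polynomial with integer coefficients in the
variables `v = X 0`, `x = X 1`, `y = X 2`. -/
noncomputable def scpPoly {α : Type*} [Fintype α] (G : SimpleGraph α) :
    MvPolynomial (Fin 3) ℤ :=
  scp G (MvPolynomial.X 0) (MvPolynomial.X 1) (MvPolynomial.X 2)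

/-!
Grouping the terms of `H(F, v, x, y)` by `W` writes it as `Σ_W v^{|W|} Z(F[W], x, y)`, with `Z` the
Potts model. In a finite forest every edge is a bridge, so deleting one raises the number of
components by exactly one; hence `|E(G)| + k(G) = |V(G)|` for every finite forest `G`. Applied to
the spanning subforests `(W, A)` of `F[W]` this gives `c(W, A) = k(F[W]) + |E(F[W])| - |A|`, and
the binomial theorem sums the Potts model of `F[W]` to `x^{k(F[W])} (x + y)^{|E(F[W])|}`, where
`|E(F[W])| = |W| - k(F[W])`.
-/

open SimpleGraph

lemma Nat.card_subtype_ne_add_one {β : Type*} [Finite β] (b : β) :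
    Nat.card {c // c ≠ b} + 1 = Nat.card β := by
  have := Fintype.ofFinite β
  classical
  rw [Nat.card_eq_fintype_card, Nat.card_eq_fintype_card, Fintype.card_subtype_compl,
    Fintype.card_subtype_eq]
  have := Fintype.card_pos_iff.mpr ⟨b⟩
  omega

namespace SimpleGraph

variable {α : Type*} {G : SimpleGraph α}

lemma ncomp_bot : ncomp (⊥ : SimpleGraph α) = Nat.card α :=
  (Nat.card_eq_of_bijective _ ⟨fun _ _ h ↦ reachable_bot.mp (ConnectedComponent.eq.mp h),
    fun c ↦ c.exists_rep⟩).symm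

lemma Walk.reachable_deleteEdges_singleton_or {a b u w : α} (p : G.Walk u w) :
    (G.deleteEdges {s(a, b)}).Reachable u w ∨
    ((G.deleteEdges {s(a, b)}).Reachable u a ∧ (G.deleteEdges {s(a, b)}).Reachable b w) ∨
    ((G.deleteEdges {s(a, b)}).Reachable u b ∧ (G.deleteEdges {s(a, b)}).Reachable a w) := by
  induction p with
  | nil => exact .inl .rfl
  | @cons u x w hux q ih =>
    by_cases he : s(u, x) = s(a, b)
    · rcases Sym2.eq_iff.mp he with ⟨rfl, rfl⟩ | ⟨rfl, rfl⟩
      · rcases ih with h | ⟨h₁, h₂⟩ | ⟨h₁, h₂⟩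
        · exact .inr (.inl ⟨.rfl, h⟩)
        · exact .inl (h₁.symm.trans h₂)
        · exact .inl h₂
      · rcases ih with h | ⟨h₁, h₂⟩ | ⟨h₁, h₂⟩
        · exact .inr (.inr ⟨.rfl, h⟩)
        · exact .inl h₂
        · exact .inl (h₁.symm.trans h₂)
    · have hux' : (G.deleteEdges {s(a, b)}).Adj u x := by simp [hux, he]
      rcases ih with h | ⟨h₁, h₂⟩ | ⟨h₁, h₂⟩
      · exact .inl (hux'.reachable.trans h)
      · exact .inr (.inl ⟨hux'.reachable.trans h₁, h₂⟩)
      · exact .inr (.inr ⟨hux'.reachable.trans h₁, h₂⟩)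

/-- Mapping the components of `G - ab` other than that of `b` into those of `G` is a bijection:
the component of `a` takes over the role of that of `b`. -/
lemma ncomp_deleteEdges_of_isBridge [Finite α] {e : Sym2 α} (he : e ∈ G.edgeSet)
    (hbr : G.IsBridge e) : ncomp (G.deleteEdges {e}) = ncomp G + 1 := by
  induction e using Sym2.ind with | h a b => ?_
  have hab : G.Adj a b := he
  have hnreach := isBridge_iff.mp hbr
  set G' := G.deleteEdges {s(a, b)}
  set cb := G'.connectedComponentMk b
  let f : {c : G'.ConnectedComponent // c ≠ cb} → G.ConnectedComponent :=
    fun c ↦ c.1.map (Hom.ofLE (deleteEdges_le _))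
  have hf : Function.Bijective f := by
    constructor
    · rintro ⟨c, hc⟩ ⟨c', hc'⟩ hcc
      induction c using ConnectedComponent.ind with | h u => ?_
      induction c' using ConnectedComponent.ind with | h w => ?_
      obtain ⟨p⟩ := ConnectedComponent.eq.mp hcc
      rcases p.reachable_deleteEdges_singleton_or (a := a) (b := b) with h | ⟨-, h⟩ | ⟨h, -⟩
      · exact Subtype.ext (ConnectedComponent.sound h)
      · exact absurd (ConnectedComponent.sound h.symm) hc'
      · exact absurd (ConnectedComponent.sound h) hc
    · intro c
      induction c using ConnectedComponent.ind with | h w => ?_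
      by_cases hbw : G'.Reachable b w
      · refine ⟨⟨G'.connectedComponentMk a, fun h ↦ hnreach (ConnectedComponent.exact h)⟩, ?_⟩
        exact ConnectedComponent.sound (hab.reachable.trans (hbw.mono (deleteEdges_le _)))
      · exact ⟨⟨G'.connectedComponentMk w, fun h ↦ hbw (ConnectedComponent.exact h).symm⟩, rfl⟩
  rw [ncomp, ncomp, ← Nat.card_eq_of_bijective f hf, Nat.card_subtype_ne_add_one]

lemma IsAcyclic.ncard_edgeSet_add_ncomp [Finite α] (hG : G.IsAcyclic) :
    G.edgeSet.ncard + ncomp G = Nat.card α := by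
  induction hn : G.edgeSet.ncard generalizing G with
  | zero =>
    obtain rfl : G = ⊥ := edgeSet_eq_empty.mp ((Set.ncard_eq_zero).mp hn)
    simp [ncomp_bot]
  | succ n ih =>
    obtain ⟨e, he⟩ : G.edgeSet.Nonempty := Set.nonempty_of_ncard_ne_zero (by omega)
    have hdel := ih (hG.anti (deleteEdges_le {e}))
      (by rw [edgeSet_deleteEdges, Set.ncard_sdiff_singleton_of_mem he, hn]; rfl)
    rw [ncomp_deleteEdges_of_isBridge he (isAcyclic_iff_forall_isBridge.mp hG he)] at hdel
    omega

lemma IsAcyclic.ncomp_of_le [Finite α] {H : SimpleGraph α} (hG : G.IsAcyclic) (hHG : H ≤ G) :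
    ncomp H = ncomp G + (G.edgeSet.ncard - H.edgeSet.ncard) := by
  have hH := (hG.anti hHG).ncard_edgeSet_add_ncomp
  have hle : H.edgeSet.ncard ≤ G.edgeSet.ncard := Set.ncard_le_ncard (edgeSet_mono hHG)
  have := hG.ncard_edgeSet_add_ncomp
  omega

lemma edgeSet_fromEdgeSet_of_subset {s : Set (Sym2 α)} (hs : s ⊆ G.edgeSet) :
    (fromEdgeSet s).edgeSet = s := by
  rw [edgeSet_fromEdgeSet, sdiff_eq_left, Set.disjoint_left]
  exact fun e he ↦ G.not_isDiag_of_mem_edgeSet (hs he)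

end SimpleGraph

section Potts

variable {α : Type*} [Fintype α] {G : SimpleGraph α} {R : Type*} [CommRing R]

lemma mem_edgeFinset' {e : Sym2 α} : e ∈ edgeFinset' G ↔ e ∈ G.edgeSet :=
  Set.Finite.mem_toFinset _

lemma card_edgeFinset' : (edgeFinset' G).card = G.edgeSet.ncard :=
  (Set.ncard_eq_toFinset_card _ _).symm

lemma potts_of_isAcyclic (hG : G.IsAcyclic) (x y : R) :
    potts G x y = x ^ ncomp G * (x + y) ^ (edgeFinset' G).card := by
  have hterm : ∀ A ∈ (edgeFinset' G).powerset,
      x ^ ncomp (fromEdgeSet (A : Set (Sym2 α))) * y ^ A.card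
        = x ^ ncomp G * (y ^ A.card * x ^ ((edgeFinset' G).card - A.card)) := by
    intro A hA
    have hAG : (A : Set (Sym2 α)) ⊆ G.edgeSet :=
      fun e he ↦ mem_edgeFinset'.mp (mem_powerset.mp hA he)
    rw [hG.ncomp_of_le (G.fromEdgeSet_le.mpr (Set.sdiff_subset.trans hAG)),
      edgeSet_fromEdgeSet_of_subset hAG, Set.ncard_coe_finset, card_edgeFinset', pow_add]
    ring
  rw [potts, sum_congr rfl hterm, ← mul_sum, add_comm x y, sum_pow_mul_eq_add_pow]

lemma scp_eq_sum_potts (v x y : R) :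
    scp G v x y = ∑ W : Finset α, v ^ W.card * potts (G.induce (W : Set α)) x y := by
  simp only [scp, potts, mul_sum, mul_assoc]

end Potts

/-- For a forest `F`,
`H(F, v, x, y) = Σ_{W ⊆ V} v^{|W|} · x^{k(F[W])} · (x + y)^{|W| − k(F[W])}`. -/
theorem scp_of_isAcyclic {V : Type*} [Fintype V] {R : Type*} [CommRing R]
    (F : SimpleGraph V) (hF : F.IsAcyclic) (v x y : R) :
    scp F v x y
      = ∑ W : Finset V, v ^ W.card * x ^ ncomp (F.induce (W : Set V)) *
          (x + y) ^ (W.card - ncomp (F.induce (W : Set V))) := by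
  rw [scp_eq_sum_potts]
  refine sum_congr rfl fun W _ ↦ ?_
  have hcount := (hF.induce (W : Set V)).ncard_edgeSet_add_ncomp
  rw [Nat.card_coe_set_eq, Set.ncard_coe_finset] at hcount
  rw [potts_of_isAcyclic (hF.induce _), card_edgeFinset', mul_assoc]
  congr 3
  omega
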